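/- For an integer m ≥ 1, t > 0 and ρ > 0, define h̄_t^(m)(ρ) = ∫_ρ^∞ (sinh s / √(cosh s − cosh ρ)) · (s/(t·sinh s))^m · exp(−s²/(2t)) ds. Then for every integer m ≥ 1 and every t > 0, the ratio (t·sinh(ρ) · h̄_t^(m+1)(ρ)) / (ρ · h̄_t^(m)(ρ)) tends to 1 as ρ → +∞. -/

import Mathlib

/-!
Write `g_m` for the integrand of `hbar m t ρ`. Since `g_{m+1}(s) = g_m(s) · s / (t sinh s)`, the
ratio is the `g_m`-weighted mean over `s > ρ` of `r(s) = s sinh ρ / (ρ sinh s)`, and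
`|r(s) - 1| ≤ exp (-2ρ) + (s - ρ)`. So it suffices that the weight concentrates at `ρ`:
`∫ g_m(s) (s - ρ) ds = O(1/ρ) · ∫ g_m`.

With `Q(ρ) = √(sinh ρ) (ρ / (t sinh ρ))^m exp (-ρ² / 2t)`, the bound
`cosh s - cosh ρ ≥ (s - ρ) sinh ρ` gives `g_m(s) ≤ Q(ρ) (s - ρ)^(-1/2) exp (-ρ (s - ρ) / 2t)` once
`ρ² ≥ 2mt`, whose first moment is a Gamma integral of size `Q(ρ) ρ^(-3/2)`. On `(ρ, ρ + 1/ρ]`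
the integrand is at least a constant times `Q(ρ) √ρ`, so `∫ g_m ≳ Q(ρ) / √ρ`.
-/

open Real Filter MeasureTheory

/-- The even-dimensional heat-kernel auxiliary function
`h̄_t^(m)(ρ) = ∫_ρ^∞ (sinh s/√(cosh s − cosh ρ)) (s/(t sinh s))^m exp(−s²/(2t)) ds`. -/
noncomputable def hbar (m : ℕ) (t ρ : ℝ) : ℝ :=
  ∫ s in Set.Ioi ρ,
    (Real.sinh s / Real.sqrt (Real.cosh s - Real.cosh ρ)) *
      (s / (t * Real.sinh s)) ^ m * Real.exp (-s ^ 2 / (2 * t))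

open Set

section Hyperbolic

variable {ρ s : ℝ}

lemma exists_cosh_sub_cosh_eq (h : ρ < s) :
    ∃ c ∈ Ioo ρ s, cosh s - cosh ρ = (s - ρ) * sinh c := by
  obtain ⟨c, hc, hslope⟩ := exists_hasDerivAt_eq_slope cosh sinh h continuous_cosh.continuousOn
    fun x _ => hasDerivAt_cosh x
  exact ⟨c, hc, by rw [hslope, mul_div_cancel₀ _ (sub_pos.2 h).ne']⟩

lemma mul_sinh_lt_cosh_sub_cosh (h : ρ < s) : (s - ρ) * sinh ρ < cosh s - cosh ρ := by
  obtain ⟨c, hc, hcosh⟩ := exists_cosh_sub_cosh_eq h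
  rw [hcosh]
  exact mul_lt_mul_of_pos_left (sinh_lt_sinh.2 hc.1) (sub_pos.2 h)

lemma cosh_sub_cosh_lt_mul_sinh (h : ρ < s) : cosh s - cosh ρ < (s - ρ) * sinh s := by
  obtain ⟨c, hc, hcosh⟩ := exists_cosh_sub_cosh_eq h
  rw [hcosh]
  exact mul_lt_mul_of_pos_left (sinh_lt_sinh.2 hc.2) (sub_pos.2 h)

lemma one_sub_exp_mul_exp_le_sinh_div_sinh (hρ : 0 ≤ ρ) (hs : 0 < s) :
    (1 - exp (-(2 * ρ))) * exp (ρ - s) ≤ sinh ρ / sinh s := by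
  have hsinh_s : 0 < sinh s := sinh_pos_iff.2 hs
  have hsinh_s_le : sinh s ≤ exp s / 2 := by rw [sinh_eq]; linarith [exp_pos (-s)]
  have hlhs : (1 - exp (-(2 * ρ))) * exp (ρ - s) = sinh ρ * (2 / exp s) := by
    rw [sinh_eq, exp_sub, show -(2 * ρ) = -ρ - ρ by ring, exp_sub]
    field_simp
  rw [hlhs, le_div_iff₀ hsinh_s, mul_assoc]
  refine mul_le_of_le_one_right (sinh_nonneg_iff.2 hρ) ?_
  rw [div_mul_eq_mul_div, div_le_one (exp_pos s)]
  linarith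

lemma abs_mul_sinh_div_sub_one_le (hρ : 1 ≤ ρ) (hs : ρ < s) :
    |s * sinh ρ / (ρ * sinh s) - 1| ≤ exp (-(2 * ρ)) + (s - ρ) := by
  have hρ0 : 0 < ρ := by linarith
  have hsinh_ρ : 0 < sinh ρ := sinh_pos_iff.2 hρ0
  have hsinh_s : 0 < sinh s := hsinh_ρ.trans_le (sinh_le_sinh.2 hs.le)
  have hsinh_le : sinh ρ ≤ sinh s := sinh_le_sinh.2 hs.le
  have hratio : sinh ρ / sinh s ≤ s * sinh ρ / (ρ * sinh s) := by
    rw [mul_div_mul_comm]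
    exact le_mul_of_one_le_left (div_nonneg hsinh_ρ.le hsinh_s.le) ((one_le_div hρ0).2 hs.le)
  have hlower := one_sub_exp_mul_exp_le_sinh_div_sinh hρ0.le (hρ0.trans hs)
  have hexp : 1 - (s - ρ) ≤ exp (ρ - s) := by linarith [add_one_le_exp (ρ - s)]
  have hupper : s * sinh ρ / (ρ * sinh s) ≤ s / ρ := by
    rw [mul_div_mul_comm]
    exact mul_le_of_le_one_right (div_nonneg (by linarith) hρ0.le) ((div_le_one hsinh_s).2 hsinh_le)
  have hsρ : s / ρ ≤ 1 + (s - ρ) := by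
    rw [div_le_iff₀ hρ0]; nlinarith
  rw [abs_le]
  constructor
  · nlinarith [exp_pos (-(2 * ρ)), exp_le_one_iff.2 (show -(2 * ρ) ≤ 0 by linarith)]
  · linarith [exp_pos (-(2 * ρ))]

lemma inv_two_mul_exp_one_le_sinh_div_sinh (hρ : 1 ≤ ρ) (hs : ρ < s) (hs' : s ≤ ρ + 1) :
    (2 * exp 1)⁻¹ ≤ sinh ρ / sinh s := by
  refine le_trans ?_ (one_sub_exp_mul_exp_le_sinh_div_sinh (by linarith) (by linarith))
  have hexp_two : exp (-(2 * ρ)) ≤ 2⁻¹ := by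
    rw [exp_neg, inv_le_comm₀ (exp_pos _) (by norm_num)]
    linarith [add_one_le_exp (2 * ρ)]
  have hexp_shift : exp (-1) ≤ exp (ρ - s) := exp_le_exp.2 (by linarith)
  rw [mul_inv, ← exp_neg]
  gcongr
  all_goals linarith

lemma sqrt_mul_sqrt_sinh_le_sinh_div_sqrt (hρ : 0 < ρ) (hs : ρ < s) (hs' : s ≤ ρ + 1 / ρ) :
    √ρ * √(sinh ρ) ≤ sinh s / √(cosh s - cosh ρ) := by
  have hsinh_ρ : 0 < sinh ρ := sinh_pos_iff.2 hρ
  have hsinh_le : sinh ρ ≤ sinh s := sinh_le_sinh.2 hs.le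
  have hΔ_pos : 0 < cosh s - cosh ρ :=
    (mul_pos (sub_pos.2 hs) hsinh_ρ).trans (mul_sinh_lt_cosh_sub_cosh hs)
  have hΔ_le : ρ * (cosh s - cosh ρ) ≤ sinh s := by
    have h := (cosh_sub_cosh_lt_mul_sinh hs).le
    have hu : ρ * (s - ρ) ≤ 1 := by rw [← le_div_iff₀' hρ]; linarith
    nlinarith
  rw [le_div_iff₀ (sqrt_pos.2 hΔ_pos), ← sqrt_mul hρ.le, ← sqrt_mul (by positivity),
    ← sqrt_sq (hsinh_ρ.le.trans hsinh_le)]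
  apply sqrt_le_sqrt
  nlinarith

end Hyperbolic

section Kernel

variable {E : Type*} [NormedAddCommGroup E] {a b : ℝ}

lemma integral_Ioi_comp_sub [NormedSpace ℝ E] (f : ℝ → E) (ρ : ℝ) :
    ∫ s in Ioi ρ, f (s - ρ) = ∫ u in Ioi 0, f u := by
  have h := (measurePreserving_add_right volume ρ).setIntegral_preimage_emb
    (measurableEmbedding_addRight ρ) (fun s => f (s - ρ)) (Ioi ρ)
  simp only [preimage_add_const_Ioi, sub_self, add_sub_cancel_right] at h
  exact h.symm

lemma integrableOn_Ioi_comp_sub_iff {f : ℝ → E} (ρ : ℝ) :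
    IntegrableOn (fun s => f (s - ρ)) (Ioi ρ) ↔ IntegrableOn f (Ioi 0) := by
  have h := (measurePreserving_add_right volume ρ).integrableOn_comp_preimage
    (measurableEmbedding_addRight ρ) (f := fun s => f (s - ρ)) (s := Ioi ρ)
  simp only [Function.comp_def, preimage_add_const_Ioi, sub_self, add_sub_cancel_right] at h
  exact h.symm

lemma integrableOn_sub_rpow_mul_exp_neg_mul (ha : -1 < a) (hb : 0 < b) (ρ : ℝ) :
    IntegrableOn (fun s => (s - ρ) ^ a * exp (-(b * (s - ρ)))) (Ioi ρ) := by
  rw [integrableOn_Ioi_comp_sub_iff (f := fun u => u ^ a * exp (-(b * u)))]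
  simpa [rpow_one, neg_mul] using integrableOn_rpow_mul_exp_neg_mul_rpow ha one_pos hb

lemma integral_sub_rpow_mul_exp_neg_mul (ha : 0 < a) (hb : 0 < b) (ρ : ℝ) :
    ∫ s in Ioi ρ, (s - ρ) ^ (a - 1) * exp (-(b * (s - ρ))) = (1 / b) ^ a * Gamma a :=
  (integral_Ioi_comp_sub (fun u => u ^ (a - 1) * exp (-(b * u))) ρ).trans
    (integral_rpow_mul_exp_neg_mul_Ioi ha hb)

end Kernel

section Integrand

noncomputable def hbarIntegrand (m : ℕ) (t ρ s : ℝ) : ℝ :=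
  sinh s / √(cosh s - cosh ρ) * (s / (t * sinh s)) ^ m * exp (-s ^ 2 / (2 * t))

noncomputable def hbarScale (m : ℕ) (t ρ : ℝ) : ℝ :=
  √(sinh ρ) * (ρ / (t * sinh ρ)) ^ m * exp (-ρ ^ 2 / (2 * t))

/-- `Γ(3/2) (2t)^(3/2)` is the first moment of the kernel bound, `(2e)^m exp (3/2t)` the inverse
of the constant in the lower bound on `(ρ, ρ + 1/ρ]`. -/
noncomputable def hbarMomentConst (m : ℕ) (t : ℝ) : ℝ :=
  (2 * t) ^ (3 / 2 : ℝ) * Gamma (3 / 2) * (2 * exp 1) ^ m * exp (3 / (2 * t))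

variable {m : ℕ} {t ρ s : ℝ}

lemma hbar_eq_integral_hbarIntegrand : hbar m t ρ = ∫ s in Ioi ρ, hbarIntegrand m t ρ s := rfl

lemma measurable_hbarIntegrand : Measurable (hbarIntegrand m t ρ) := by
  unfold hbarIntegrand; fun_prop

lemma hbarScale_pos (ht : 0 < t) (hρ : 0 < ρ) : 0 < hbarScale m t ρ := by
  have := sinh_pos_iff.2 hρ
  unfold hbarScale; positivity

lemma hbarIntegrand_nonneg (ht : 0 < t) (hρ : 0 < ρ) (hs : ρ < s) : 0 ≤ hbarIntegrand m t ρ s := by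
  have := hρ.trans hs
  have := sinh_pos_iff.2 (hρ.trans hs)
  unfold hbarIntegrand
  positivity

lemma mul_hbarIntegrand_succ (ht : t ≠ 0) (hρ : ρ ≠ 0) :
    t * sinh ρ * hbarIntegrand (m + 1) t ρ s =
      ρ * (hbarIntegrand m t ρ s * (s * sinh ρ / (ρ * sinh s))) := by
  unfold hbarIntegrand
  rw [pow_succ]
  field_simp

lemma hbarIntegrand_le (hm : 1 ≤ m) (ht : 0 < t) (hρ : 0 < ρ) (hs : ρ < s) :
    hbarIntegrand m t ρ s ≤
      hbarScale m t ρ *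
        ((s - ρ) ^ (-(1 / 2) : ℝ) * ((s / ρ) ^ m * exp (-(s ^ 2 - ρ ^ 2) / (2 * t)))) := by
  obtain ⟨k, rfl⟩ := Nat.exists_eq_add_of_le' hm
  have hsinh_ρ : 0 < sinh ρ := sinh_pos_iff.2 hρ
  have hsinh_s : 0 < sinh s := sinh_pos_iff.2 (hρ.trans hs)
  have hu : 0 < s - ρ := sub_pos.2 hs
  have hΔ := mul_sinh_lt_cosh_sub_cosh hs
  have hnum : 0 ≤ s ^ (k + 1) * exp (-s ^ 2 / (2 * t)) / t ^ (k + 1) := by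
    have := hρ.trans hs; positivity
  have hlhs : hbarIntegrand (k + 1) t ρ s =
      s ^ (k + 1) * exp (-s ^ 2 / (2 * t)) / t ^ (k + 1) / (sinh s ^ k * √(cosh s - cosh ρ)) := by
    unfold hbarIntegrand
    rw [div_pow, mul_pow, pow_succ (sinh s)]
    field_simp
  have hrhs : hbarScale (k + 1) t ρ * ((s - ρ) ^ (-(1 / 2) : ℝ) *
      ((s / ρ) ^ (k + 1) * exp (-(s ^ 2 - ρ ^ 2) / (2 * t)))) =
      s ^ (k + 1) * exp (-s ^ 2 / (2 * t)) / t ^ (k + 1) / (sinh ρ ^ k * √((s - ρ) * sinh ρ)) := by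
    have hexp : exp (-ρ ^ 2 / (2 * t)) * exp (-(s ^ 2 - ρ ^ 2) / (2 * t)) =
        exp (-s ^ 2 / (2 * t)) := by
      rw [← exp_add]; congr 1; ring
    rw [rpow_neg hu.le, ← sqrt_eq_rpow, sqrt_mul hu.le, ← hexp, hbarScale]
    have := sqrt_pos.2 hsinh_ρ
    have := sqrt_pos.2 hu
    rw [div_pow, div_pow, mul_pow, pow_succ (sinh ρ)]
    field_simp
    rw [sq_sqrt hsinh_ρ.le]
  rw [hlhs, hrhs]
  gcongr
  exact sinh_le_sinh.2 hs.le

lemma pow_div_mul_exp_le (ht : 0 < t) (hρ : 0 < ρ) (hmρ : 2 * m * t ≤ ρ ^ 2) (hs : ρ ≤ s) :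
    (s / ρ) ^ m * exp (-(s ^ 2 - ρ ^ 2) / (2 * t)) ≤ exp (-(ρ / (2 * t) * (s - ρ))) := by
  have hu : 0 ≤ s - ρ := sub_nonneg.2 hs
  have hpow : (s / ρ) ^ m ≤ exp (m * (s - ρ) / ρ) := by
    calc (s / ρ) ^ m ≤ exp ((s - ρ) / ρ) ^ m := by
          gcongr
          · exact div_nonneg (hρ.le.trans hs) hρ.le
          · rw [show s / ρ = (s - ρ) / ρ + 1 by field_simp; ring]; exact add_one_le_exp _
      _ = exp (m * (s - ρ) / ρ) := by rw [← exp_nat_mul]; ring_nf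
  calc (s / ρ) ^ m * exp (-(s ^ 2 - ρ ^ 2) / (2 * t))
      ≤ exp (m * (s - ρ) / ρ) * exp (-(s ^ 2 - ρ ^ 2) / (2 * t)) := by gcongr
    _ = exp (m * (s - ρ) / ρ - (s ^ 2 - ρ ^ 2) / (2 * t)) := by rw [← exp_add]; ring_nf
    _ ≤ exp (-(ρ / (2 * t) * (s - ρ))) := by
      gcongr
      have hcoef : (m : ℝ) / ρ ≤ ρ / (2 * t) := by
        rw [div_le_div_iff₀ hρ (by positivity)]
        nlinarith
      have hlin : m * (s - ρ) / ρ ≤ ρ / (2 * t) * (s - ρ) := by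
        rw [mul_div_right_comm]
        exact mul_le_mul_of_nonneg_right hcoef hu
      have hquad : (s ^ 2 - ρ ^ 2) / (2 * t) - 2 * (ρ / (2 * t) * (s - ρ)) =
          (s - ρ) ^ 2 / (2 * t) := by
        field_simp
        ring
      have : 0 ≤ (s - ρ) ^ 2 / (2 * t) := by positivity
      linarith

lemma hbarIntegrand_le_kernel (hm : 1 ≤ m) (ht : 0 < t) (hρ : 0 < ρ) (hmρ : 2 * m * t ≤ ρ ^ 2)
    (hs : ρ < s) :
    hbarIntegrand m t ρ s ≤
      hbarScale m t ρ * ((s - ρ) ^ (-(1 / 2) : ℝ) * exp (-(ρ / (2 * t) * (s - ρ)))) := by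
  refine (hbarIntegrand_le hm ht hρ hs).trans ?_
  have := hbarScale_pos (m := m) ht hρ
  have := sub_pos.2 hs
  gcongr
  exact pow_div_mul_exp_le ht hρ hmρ hs.le

lemma integrableOn_hbarIntegrand_mul_pow (hm : 1 ≤ m) (ht : 0 < t) (hρ : 0 < ρ)
    (hmρ : 2 * m * t ≤ ρ ^ 2) (k : ℕ) :
    IntegrableOn (fun s => hbarIntegrand m t ρ s * (s - ρ) ^ k) (Ioi ρ) := by
  refine Integrable.mono' ((integrableOn_sub_rpow_mul_exp_neg_mul (a := k - 1 / 2)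
      (by have := k.cast_nonneg (α := ℝ); linarith) (by positivity : 0 < ρ / (2 * t)) ρ).const_mul
      (hbarScale m t ρ))
    (measurable_hbarIntegrand.mul (by fun_prop)).aestronglyMeasurable ?_
  filter_upwards [ae_restrict_mem measurableSet_Ioi] with s hs
  have hu : 0 < s - ρ := sub_pos.2 hs
  rw [Real.norm_eq_abs, abs_of_nonneg (mul_nonneg (hbarIntegrand_nonneg ht hρ hs) (by positivity)),
    rpow_sub hu, rpow_natCast]
  calc hbarIntegrand m t ρ s * (s - ρ) ^ k
      ≤ hbarScale m t ρ * ((s - ρ) ^ (-(1 / 2) : ℝ) * exp (-(ρ / (2 * t) * (s - ρ)))) *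
          (s - ρ) ^ k := by
        gcongr
        exact hbarIntegrand_le_kernel hm ht hρ hmρ hs
    _ = _ := by rw [rpow_neg hu.le, div_eq_mul_inv]; ring

lemma le_hbarIntegrand (ht : 0 < t) (hρ : 1 ≤ ρ) (hs : ρ < s) (hs' : s ≤ ρ + 1 / ρ) :
    ((2 * exp 1) ^ m)⁻¹ * exp (-(3 / (2 * t))) * √ρ * hbarScale m t ρ ≤ hbarIntegrand m t ρ s := by
  have hρ0 : 0 < ρ := by linarith
  have hinv : 1 / ρ ≤ 1 := (div_le_one hρ0).2 hρ
  have hsinh_ρ : 0 < sinh ρ := sinh_pos_iff.2 hρ0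
  have hsinh_s : 0 < sinh s := sinh_pos_iff.2 (hρ0.trans hs)
  have hφ : ρ / (t * sinh ρ) * (2 * exp 1)⁻¹ ≤ s / (t * sinh s) :=
    calc ρ / (t * sinh ρ) * (2 * exp 1)⁻¹ ≤ ρ / (t * sinh ρ) * (sinh ρ / sinh s) := by
          gcongr
          exact inv_two_mul_exp_one_le_sinh_div_sinh hρ hs (by linarith)
      _ = ρ / (t * sinh s) := by field_simp
      _ ≤ s / (t * sinh s) := by gcongr
  have hgauss : exp (-(3 / (2 * t))) * exp (-ρ ^ 2 / (2 * t)) ≤ exp (-s ^ 2 / (2 * t)) := by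
    rw [← exp_add, neg_div, neg_div, ← neg_add, ← add_div]
    gcongr
    have : s ^ 2 ≤ (ρ + 1 / ρ) ^ 2 := by gcongr; linarith
    have : (ρ + 1 / ρ) ^ 2 = ρ ^ 2 + 2 + (1 / ρ) ^ 2 := by field_simp; ring
    nlinarith
  calc ((2 * exp 1) ^ m)⁻¹ * exp (-(3 / (2 * t))) * √ρ * hbarScale m t ρ
      = √ρ * √(sinh ρ) * (ρ / (t * sinh ρ) * (2 * exp 1)⁻¹) ^ m *
          (exp (-(3 / (2 * t))) * exp (-ρ ^ 2 / (2 * t))) := by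
        simp only [hbarScale, mul_pow, mul_inv, inv_pow]; ring
    _ ≤ sinh s / √(cosh s - cosh ρ) * (s / (t * sinh s)) ^ m * exp (-s ^ 2 / (2 * t)) := by
        have hsinh := sqrt_mul_sqrt_sinh_le_sinh_div_sqrt hρ0 hs hs'
        have hsinh0 : 0 ≤ sinh s / √(cosh s - cosh ρ) :=
          (by positivity : 0 ≤ √ρ * √(sinh ρ)).trans hsinh
        have hφ0 : 0 ≤ s / (t * sinh s) := div_nonneg (by linarith) (mul_pos ht hsinh_s).le
        gcongr

lemma hbarScale_le_hbar (hm : 1 ≤ m) (ht : 0 < t) (hρ : 1 ≤ ρ) (hmρ : 2 * m * t ≤ ρ ^ 2) :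
    ((2 * exp 1) ^ m)⁻¹ * exp (-(3 / (2 * t))) * hbarScale m t ρ / √ρ ≤ hbar m t ρ := by
  have hρ0 : 0 < ρ := by linarith
  have hint := integrableOn_hbarIntegrand_mul_pow hm ht hρ0 hmρ 0
  simp only [pow_zero, mul_one] at hint
  calc ((2 * exp 1) ^ m)⁻¹ * exp (-(3 / (2 * t))) * hbarScale m t ρ / √ρ
      = ∫ _ in Ioc ρ (ρ + 1 / ρ), ((2 * exp 1) ^ m)⁻¹ * exp (-(3 / (2 * t))) * √ρ *
          hbarScale m t ρ := by
        rw [setIntegral_const, volume_real_Ioc_of_le (by simp [hρ0.le]), add_sub_cancel_left,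
          smul_eq_mul]
        have := sqrt_pos.2 hρ0
        field_simp
        rw [sq_sqrt hρ0.le]
    _ ≤ ∫ s in Ioc ρ (ρ + 1 / ρ), hbarIntegrand m t ρ s :=
        setIntegral_mono_on (integrableOn_const measure_Ioc_lt_top.ne)
          (hint.mono_set Ioc_subset_Ioi_self)
          measurableSet_Ioc fun s hs => le_hbarIntegrand ht hρ hs.1 hs.2
    _ ≤ hbar m t ρ :=
        setIntegral_mono_set hint
          ((ae_restrict_iff' measurableSet_Ioi).2 (ae_of_all _ fun s hs =>
            hbarIntegrand_nonneg ht hρ0 hs))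
          Ioc_subset_Ioi_self.eventuallyLE

lemma integral_hbarIntegrand_mul_sub_le (hm : 1 ≤ m) (ht : 0 < t) (hρ : 0 < ρ)
    (hmρ : 2 * m * t ≤ ρ ^ 2) :
    ∫ s in Ioi ρ, hbarIntegrand m t ρ s * (s - ρ) ≤
      hbarScale m t ρ * ((2 * t / ρ) ^ (3 / 2 : ℝ) * Gamma (3 / 2)) := by
  have hb : 0 < ρ / (2 * t) := by positivity
  calc ∫ s in Ioi ρ, hbarIntegrand m t ρ s * (s - ρ)
      ≤ ∫ s in Ioi ρ, hbarScale m t ρ *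
          ((s - ρ) ^ ((3 / 2 : ℝ) - 1) * exp (-(ρ / (2 * t) * (s - ρ)))) := by
        refine setIntegral_mono_on
          (by simpa using integrableOn_hbarIntegrand_mul_pow hm ht hρ hmρ 1)
          ((integrableOn_sub_rpow_mul_exp_neg_mul (by norm_num) hb ρ).const_mul _)
          measurableSet_Ioi fun s hs => ?_
        have hu : 0 < s - ρ := sub_pos.2 hs
        calc hbarIntegrand m t ρ s * (s - ρ)
            ≤ hbarScale m t ρ * ((s - ρ) ^ (-(1 / 2) : ℝ) * exp (-(ρ / (2 * t) * (s - ρ)))) *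
                (s - ρ) := by
              gcongr
              exact hbarIntegrand_le_kernel hm ht hρ hmρ hs
          _ = _ := by
              rw [show (3 / 2 : ℝ) - 1 = -(1 / 2) + 1 by norm_num, rpow_add_one hu.ne']
              ring
    _ = hbarScale m t ρ * ((2 * t / ρ) ^ (3 / 2 : ℝ) * Gamma (3 / 2)) := by
        rw [integral_const_mul, integral_sub_rpow_mul_exp_neg_mul (by norm_num) hb, one_div_div]

lemma integral_hbarIntegrand_mul_sub_le_div_mul_hbar (hm : 1 ≤ m) (ht : 0 < t) (hρ : 1 ≤ ρ)
    (hmρ : 2 * m * t ≤ ρ ^ 2) :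
    ∫ s in Ioi ρ, hbarIntegrand m t ρ s * (s - ρ) ≤ hbarMomentConst m t / ρ * hbar m t ρ := by
  have hρ0 : 0 < ρ := by linarith
  calc ∫ s in Ioi ρ, hbarIntegrand m t ρ s * (s - ρ)
      ≤ hbarScale m t ρ * ((2 * t / ρ) ^ (3 / 2 : ℝ) * Gamma (3 / 2)) :=
        integral_hbarIntegrand_mul_sub_le hm ht hρ0 hmρ
    _ = hbarMomentConst m t / ρ *
          (((2 * exp 1) ^ m)⁻¹ * exp (-(3 / (2 * t))) * hbarScale m t ρ / √ρ) := by
        rw [hbarMomentConst, div_rpow (by positivity) hρ0.le,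
          show (3 / 2 : ℝ) = 1 + 1 / 2 by norm_num, rpow_add hρ0, rpow_one, ← sqrt_eq_rpow, exp_neg]
        have := sqrt_pos.2 hρ0
        field_simp
    _ ≤ _ := by
        have : 0 ≤ hbarMomentConst m t := by
          have := rpow_nonneg (by positivity : (0 : ℝ) ≤ 2 * t) (3 / 2)
          unfold hbarMomentConst
          positivity
        gcongr
        exact hbarScale_le_hbar hm ht hρ hmρ

lemma abs_integral_hbarIntegrand_succ_sub_hbar_le (hm : 1 ≤ m) (ht : 0 < t) (hρ : 1 ≤ ρ)
    (hmρ : 2 * (m + 1) * t ≤ ρ ^ 2) :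
    |(∫ s in Ioi ρ, t * sinh ρ / ρ * hbarIntegrand (m + 1) t ρ s) - hbar m t ρ| ≤
      exp (-(2 * ρ)) * hbar m t ρ + ∫ s in Ioi ρ, hbarIntegrand m t ρ s * (s - ρ) := by
  have hρ0 : 0 < ρ := by linarith
  have hmρ' : 2 * m * t ≤ ρ ^ 2 := le_trans (by gcongr; linarith) hmρ
  have hint := integrableOn_hbarIntegrand_mul_pow hm ht hρ0 hmρ' 0
  have hint_succ := integrableOn_hbarIntegrand_mul_pow (m := m + 1) (by omega) ht hρ0
    (by push_cast; exact hmρ) 0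
  have hint_sub := integrableOn_hbarIntegrand_mul_pow hm ht hρ0 hmρ' 1
  simp only [pow_zero, pow_one, mul_one] at hint hint_succ hint_sub
  rw [← Real.norm_eq_abs, hbar_eq_integral_hbarIntegrand,
    ← integral_sub (hint_succ.const_mul _) hint,
    ← integral_const_mul (exp (-(2 * ρ))), ← integral_add (hint.const_mul _) hint_sub]
  refine norm_integral_le_of_norm_le ((hint.const_mul _).add hint_sub) ?_
  filter_upwards [ae_restrict_mem measurableSet_Ioi] with s hs
  have hg := hbarIntegrand_nonneg (m := m) ht hρ0 hs
  have hsucc : t * sinh ρ / ρ * hbarIntegrand (m + 1) t ρ s =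
      hbarIntegrand m t ρ s * (s * sinh ρ / (ρ * sinh s)) := by
    rw [div_mul_eq_mul_div, mul_hbarIntegrand_succ ht.ne' hρ0.ne', mul_div_cancel_left₀ _ hρ0.ne']
  rw [hsucc, Real.norm_eq_abs, ← mul_sub_one, abs_mul, abs_of_nonneg hg]
  calc hbarIntegrand m t ρ s * |s * sinh ρ / (ρ * sinh s) - 1|
      ≤ hbarIntegrand m t ρ s * (exp (-(2 * ρ)) + (s - ρ)) := by
        gcongr
        exact abs_mul_sinh_div_sub_one_le hρ hs
    _ = _ := by ring

lemma abs_hbar_ratio_sub_one_le (hm : 1 ≤ m) (ht : 0 < t) (hρ : 1 ≤ ρ)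
    (hmρ : 2 * (m + 1) * t ≤ ρ ^ 2) :
    |t * sinh ρ * hbar (m + 1) t ρ / (ρ * hbar m t ρ) - 1| ≤
      exp (-(2 * ρ)) + hbarMomentConst m t / ρ := by
  have hρ0 : 0 < ρ := by linarith
  have hmρ' : 2 * m * t ≤ ρ ^ 2 := le_trans (by gcongr; linarith) hmρ
  have hpos : 0 < hbar m t ρ :=
    lt_of_lt_of_le (by have := hbarScale_pos (m := m) ht hρ0; positivity)
      (hbarScale_le_hbar hm ht hρ hmρ')
  have hnum : t * sinh ρ * hbar (m + 1) t ρ =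
      ρ * ∫ s in Ioi ρ, t * sinh ρ / ρ * hbarIntegrand (m + 1) t ρ s := by
    rw [integral_const_mul, hbar_eq_integral_hbarIntegrand]
    field_simp
  rw [hnum, mul_div_mul_left _ _ hρ0.ne', div_sub_one hpos.ne', abs_div, abs_of_pos hpos,
    div_le_iff₀ hpos]
  calc _ ≤ exp (-(2 * ρ)) * hbar m t ρ + ∫ s in Ioi ρ, hbarIntegrand m t ρ s * (s - ρ) :=
        abs_integral_hbarIntegrand_succ_sub_hbar_le hm ht hρ hmρ
    _ ≤ exp (-(2 * ρ)) * hbar m t ρ + hbarMomentConst m t / ρ * hbar m t ρ := by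
        gcongr
        exact integral_hbarIntegrand_mul_sub_le_div_mul_hbar hm ht hρ hmρ'
    _ = _ := by ring

end Integrand

/-- For every `m ≥ 1` and `t > 0`,
`(t sinh ρ · h̄_t^(m+1)(ρ)) / (ρ · h̄_t^(m)(ρ)) → 1` as `ρ → +∞`. -/
theorem hbar_ratio_tendsto_one (m : ℕ) (hm : 1 ≤ m) (t : ℝ) (ht : 0 < t) :
    Tendsto (fun ρ : ℝ => (t * Real.sinh ρ * hbar (m + 1) t ρ) / (ρ * hbar m t ρ))
      atTop (nhds 1) := by
  have hbound : ∀ᶠ ρ in atTop, ‖t * sinh ρ * hbar (m + 1) t ρ / (ρ * hbar m t ρ) - 1‖ ≤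
      exp (-(2 * ρ)) + hbarMomentConst m t / ρ := by
    filter_upwards [eventually_ge_atTop 1,
      (tendsto_pow_atTop two_ne_zero).eventually_ge_atTop (2 * (m + 1) * t)] with ρ hρ hmρ
    exact abs_hbar_ratio_sub_one_le hm ht hρ hmρ
  have hlim : Tendsto (fun ρ => exp (-(2 * ρ)) + hbarMomentConst m t / ρ) atTop (nhds 0) := by
    simpa using (tendsto_exp_neg_atTop_nhds_zero.comp
      (tendsto_id.const_mul_atTop two_pos)).add (tendsto_const_nhds.div_atTop tendsto_id)
  exact tendsto_iff_norm_sub_tendsto_zero.2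
    (squeeze_zero' (Eventually.of_forall fun _ => norm_nonneg _) hbound hlim)
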